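/- Let I be a monotone NAE3SAT instance over a finite variable set X, and let k ≥ 1. If I is NAE-satisfiable, then I^♯ is k-robustly NAE-satisfiable: for every partial function p from X × {1,…,2k+1} to Bool whose domain has at most k elements, there is a total assignment extending p that NAE-satisfies I^♯. -/

import Mathlib

/-- An assignment `ν` NAE-satisfies a monotone NAE-SAT instance `I` (a finite set of
clauses, each a finite set of variables) if `ν` is not constant on any clause. -/
def NAESat {X : Type} (I : Finset (Finset X)) (ν : X → Bool) : Prop :=
  ∀ C ∈ I, ∃ x ∈ C, ∃ y ∈ C, ν x ≠ ν y

/-- An assignment `μ` of the variables `X × Fin (2k+1)` NAE-satisfies the Gottlob power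
instance `I^♯`: for each clause `C` of `I` and each choice of a `(k+1)`-element subset
`J x` of `Fin (2k+1)` for the variables `x ∈ C`, the assignment `μ` is not constant on
the corresponding `(3k+3)`-element clause `⋃ x ∈ C, {x} × J x`. -/
def SharpSat {X : Type} (k : ℕ) (I : Finset (Finset X))
    (μ : X × Fin (2 * k + 1) → Bool) : Prop :=
  ∀ C ∈ I, ∀ J : X → Finset (Fin (2 * k + 1)),
    (∀ x ∈ C, (J x).card = k + 1) →
      ∃ x ∈ C, ∃ j ∈ J x, ∃ y ∈ C, ∃ j' ∈ J y, μ (x, j) ≠ μ (y, j')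

/-!
Copy a NAE-satisfying assignment `ν` of `I` onto every copy `(x, j)` of each variable `x` and
overwrite it by `p` on the at most `k` variables of `D`. A clause of `I^♯` uses `k + 1` copies of
each variable of a clause `C` of `I`, so each of them keeps a copy outside `D`, where the
assignment is still `ν`; the two variables of `C` on which `ν` differs then make the clause
non-constant.
-/

theorem Finset.exists_prodMk_notMem_of_card_lt {α β : Type*} (D : Finset (α × β)) (a : α)
    {s : Finset β} (hs : D.card < s.card) : ∃ j ∈ s, (a, j) ∉ D := by
  obtain ⟨z, hz, hzD⟩ := Finset.exists_mem_notMem_of_card_lt_card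
    (hs.trans_eq (Finset.card_map (Function.Embedding.sectR a β)).symm)
  obtain ⟨j, hj, rfl⟩ := Finset.mem_map.mp hz
  exact ⟨j, hj, hzD⟩

theorem sharpSat_of_eq_outside {X : Type} {I : Finset (Finset X)} {ν : X → Bool}
    (hν : NAESat I ν) {k : ℕ} {D : Finset (X × Fin (2 * k + 1))} (hD : D.card ≤ k)
    {μ : X × Fin (2 * k + 1) → Bool} (hμ : ∀ z ∉ D, μ z = ν z.1) : SharpSat k I μ := by
  intro C hC J hJ
  obtain ⟨x, hx, y, hy, hxy⟩ := hν C hC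
  have free : ∀ a ∈ C, ∃ j ∈ J a, (a, j) ∉ D := fun a ha =>
    D.exists_prodMk_notMem_of_card_lt a (by rw [hJ a ha]; omega)
  obtain ⟨j, hj, hjD⟩ := free x hx
  obtain ⟨j', hj', hj'D⟩ := free y hy
  exact ⟨x, hx, j, hj, y, hy, j', hj', by rwa [hμ _ hjD, hμ _ hj'D]⟩

theorem stmt_7 {X : Type} (I : Finset (Finset X)) (k : ℕ)
    (hsat : ∃ ν : X → Bool, NAESat I ν)
    (D : Finset (X × Fin (2 * k + 1))) (hD : D.card ≤ k)
    (p : X × Fin (2 * k + 1) → Bool) :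
    ∃ μ : X × Fin (2 * k + 1) → Bool, SharpSat k I μ ∧ ∀ x ∈ D, μ x = p x := by
  classical
  obtain ⟨ν, hν⟩ := hsat
  refine ⟨D.piecewise p (ν ∘ Prod.fst), sharpSat_of_eq_outside hν hD ?_, ?_⟩
  · exact fun z hz => D.piecewise_eq_of_notMem _ _ hz
  · exact fun z hz => D.piecewise_eq_of_mem _ _ hz
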